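/- arXiv:2509.26113 — 3 statements merged into one kernel-verified Lean document; each statement's English description precedes it below -/
import Mathlib

section
/- Let ν ∈ ℝ and let u : ℝ × ℝ → ℝ be twice continuously differentiable and satisfy Burgers' equation ∂u/∂t + u·∂u/∂x − ν·∂²u/∂x² = 0 on all of ℝ². Fix ε ∈ ℝ and define, for all (x,t) with 1 − εt ≠ 0, the projectively transformed function v(x,t) := ( u( x/(1 − εt), t/(1 − εt) ) − εx ) / (1 − εt). Then v satisfies ∂v/∂t(x,t) + v(x,t)·∂v/∂x(x,t) − ν·∂²v/∂x²(x,t) = 0 at every point (x,t) with 1 − εt ≠ 0. -/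
noncomputable def Dx (u : ℝ × ℝ → ℝ) (x t : ℝ) : ℝ := deriv (fun y => u (y, t)) x
noncomputable def Dt' (u : ℝ × ℝ → ℝ) (x t : ℝ) : ℝ := deriv (fun s => u (x, s)) t
noncomputable def Dxx (u : ℝ × ℝ → ℝ) (x t : ℝ) : ℝ := deriv (fun y => Dx u y t) x

/-- Burgers residual R[u](x,t) = u_t + u u_x - ν u_xx. -/
noncomputable def burgersRes (ν : ℝ) (u : ℝ × ℝ → ℝ) (x t : ℝ) : ℝ :=
  Dt' u x t + u (x, t) * Dx u x t - ν * Dxx u x t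

theorem burgers_projective_symmetry
    (ν : ℝ) (u : ℝ × ℝ → ℝ) (hu : ContDiff ℝ 2 u)
    (hsol : ∀ x t : ℝ, burgersRes ν u x t = 0) (ε : ℝ) :
    ∀ x t : ℝ, 1 - ε * t ≠ 0 →
      burgersRes ν
        (fun p => (u (p.1 / (1 - ε * p.2), p.2 / (1 - ε * p.2)) - ε * p.1) / (1 - ε * p.2))
        x t = 0 := by
  intro x t hc
  have hud : Differentiable ℝ u := hu.differentiable (by norm_num)
  set w : ℝ × ℝ → ℝ := fun p => fderiv ℝ u p (1, 0) with hwdef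
  have hwc : ContDiff ℝ 1 w :=
    (hu.fderiv_right (by norm_num : (1:WithTop ℕ∞) + 1 ≤ 2)).clm_apply contDiff_const
  have hwd : Differentiable ℝ w := hwc.differentiable (by norm_num)
  -- generic partial derivative facts for u
  have hDx : ∀ X T : ℝ, HasDerivAt (fun y => u (y, T)) (w (X, T)) X := by
    intro X T
    exact (hud (X, T)).hasFDerivAt.comp_hasDerivAt X
      ((hasDerivAt_id X).prodMk (hasDerivAt_const X T))
  have hDxEq : ∀ X T : ℝ, Dx u X T = w (X, T) := fun X T => (hDx X T).deriv
  have hDt : ∀ X T : ℝ, HasDerivAt (fun s => u (X, s)) (fderiv ℝ u (X, T) (0, 1)) T := by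
    intro X T
    exact (hud (X, T)).hasFDerivAt.comp_hasDerivAt T
      ((hasDerivAt_const T X).prodMk (hasDerivAt_id T))
  have hDxw : ∀ X T : ℝ, HasDerivAt (fun y => w (y, T)) (fderiv ℝ w (X, T) (1, 0)) X := by
    intro X T
    exact (hwd (X, T)).hasFDerivAt.comp_hasDerivAt X
      ((hasDerivAt_id X).prodMk (hasDerivAt_const X T))
  have hDxxEq : ∀ X T : ℝ, Dxx u X T = fderiv ℝ w (X, T) (1, 0) := by
    intro X T
    have h : (fun y => Dx u y T) = fun y => w (y, T) := funext fun y => hDxEq y T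
    rw [Dxx, h]
    exact (hDxw X T).deriv
  -- notation for the transformed point
  set c : ℝ := 1 - ε * t with hcdef
  set X : ℝ := x / c with hX
  set T : ℝ := t / c with hT
  set U : ℝ := u (X, T) with hU
  set UX : ℝ := w (X, T) with hUX
  set UT : ℝ := fderiv ℝ u (X, T) (0, 1) with hUT
  set UXX : ℝ := fderiv ℝ w (X, T) (1, 0) with hUXX
  -- the solution property at (X, T)
  have H : UT + U * UX - ν * UXX = 0 := by
    have := hsol X T
    rwa [burgersRes, Dt', (hDt X T).deriv, hDxEq, hDxxEq] at this
  -- x-derivative of v at any y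
  have hvx : ∀ y : ℝ, HasDerivAt (fun z => (u (z / c, t / c) - ε * z) / c)
      ((w (y / c, t / c) * (1 / c) - ε) / c) y := by
    intro y
    have h1 : HasDerivAt (fun z : ℝ => (z / c, t / c)) ((1 / c : ℝ), (0 : ℝ)) y := by
      have := ((hasDerivAt_id y).div_const c).prodMk (hasDerivAt_const y (t / c))
      simpa using this
    have h2 : HasDerivAt (fun z => u (z / c, t / c)) (w (y / c, t / c) * (1 / c)) y := by
      have h3 := (hud (y / c, t / c)).hasFDerivAt.comp_hasDerivAt y h1
      have h4 : ((1 / c : ℝ), (0 : ℝ)) = (1 / c) • ((1 : ℝ), (0 : ℝ)) := by simp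
      rw [h4, map_smul] at h3
      simpa [hwdef, mul_comm, Function.comp_def] using h3
    have h5 : HasDerivAt (fun z : ℝ => ε * z) ε y := by
      simpa using (hasDerivAt_id y).const_mul ε
    exact (h2.sub h5).div_const c
  -- Dx of v
  have hDxv : ∀ y : ℝ, Dx (fun p : ℝ × ℝ =>
      (u (p.1 / (1 - ε * p.2), p.2 / (1 - ε * p.2)) - ε * p.1) / (1 - ε * p.2)) y t
      = (w (y / c, t / c) * (1 / c) - ε) / c := by
    intro y
    exact (hvx y).deriv
  -- Dxx of v
  have hDxxv : Dxx (fun p : ℝ × ℝ =>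
      (u (p.1 / (1 - ε * p.2), p.2 / (1 - ε * p.2)) - ε * p.1) / (1 - ε * p.2)) x t
      = (UXX * (1 / c) * (1 / c)) / c := by
    rw [Dxx]
    have h : (fun y => Dx (fun p : ℝ × ℝ =>
        (u (p.1 / (1 - ε * p.2), p.2 / (1 - ε * p.2)) - ε * p.1) / (1 - ε * p.2)) y t)
        = fun y => (w (y / c, t / c) * (1 / c) - ε) / c := funext hDxv
    rw [h]
    have h1 : HasDerivAt (fun z : ℝ => (z / c, t / c)) ((1 / c : ℝ), (0 : ℝ)) x := by
      simpa using ((hasDerivAt_id x).div_const c).prodMk (hasDerivAt_const x (t / c))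
    have h2 : HasDerivAt (fun y => w (y / c, t / c)) (UXX * (1 / c)) x := by
      have h3 := (hwd (x / c, t / c)).hasFDerivAt.comp_hasDerivAt x h1
      have h4 : ((1 / c : ℝ), (0 : ℝ)) = (1 / c) • ((1 : ℝ), (0 : ℝ)) := by simp
      rw [h4, map_smul] at h3
      simpa [hUXX, hX, hT, mul_comm, Function.comp_def] using h3
    exact (((h2.mul_const (1 / c)).sub_const ε).div_const c).deriv
  -- Dt' of v
  have hden : HasDerivAt (fun s : ℝ => 1 - ε * s) (-ε) t := by
    simpa [Pi.sub_def] using (hasDerivAt_const t (1:ℝ)).sub ((hasDerivAt_id t).const_mul ε)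
  have hγ1 : HasDerivAt (fun s : ℝ => x / (1 - ε * s)) (x * ε / c ^ 2) t := by
    have := (hasDerivAt_const t x).div hden hc
    simpa [hcdef, Pi.div_def] using this
  have hγ2 : HasDerivAt (fun s : ℝ => s / (1 - ε * s)) ((c + t * ε) / c ^ 2) t := by
    have := (hasDerivAt_id t).div hden hc
    simpa [hcdef, mul_comm, Pi.div_def] using this
  have hγ : HasDerivAt (fun s : ℝ => (x / (1 - ε * s), s / (1 - ε * s)))
      ((x * ε / c ^ 2 : ℝ), ((c + t * ε) / c ^ 2 : ℝ)) t := hγ1.prodMk hγ2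
  have hcomp : HasDerivAt (fun s => u (x / (1 - ε * s), s / (1 - ε * s)))
      (x * ε / c ^ 2 * UX + (c + t * ε) / c ^ 2 * UT) t := by
    have h3 := (hud (X, T)).hasFDerivAt.comp_hasDerivAt t hγ
    have h4 : ((x * ε / c ^ 2 : ℝ), ((c + t * ε) / c ^ 2 : ℝ))
        = (x * ε / c ^ 2) • ((1 : ℝ), (0 : ℝ)) + ((c + t * ε) / c ^ 2) • ((0 : ℝ), (1 : ℝ)) := by
      simp
    rw [h4, map_add, map_smul, map_smul] at h3
    have hXT : (x / (1 - ε * t), t / (1 - ε * t)) = (X, T) := by rw [hX, hT, hcdef]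
    simpa [hXT, hUX, hUT, hwdef, smul_eq_mul, Function.comp_def] using h3
  have hDtv : Dt' (fun p : ℝ × ℝ =>
      (u (p.1 / (1 - ε * p.2), p.2 / (1 - ε * p.2)) - ε * p.1) / (1 - ε * p.2)) x t
      = ((x * ε / c ^ 2 * UX + (c + t * ε) / c ^ 2 * UT) * c - (U - ε * x) * (-ε)) / c ^ 2 := by
    have h := (hcomp.sub_const (ε * x)).div hden hc
    have hXT : u (x / (1 - ε * t), t / (1 - ε * t)) = U := by rw [hU, hX, hT, hcdef]
    rw [Dt']
    have := h.deriv
    simpa [hcdef, hXT, Pi.div_def, Pi.sub_def] using this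
  -- assemble
  have hct : c + t * ε = 1 := by rw [hcdef]; ring
  rw [burgersRes, hDtv, hDxv x, hDxxv, hct]
  have hXT' : u ((x, t).1 / (1 - ε * (x, t).2), (x, t).2 / (1 - ε * (x, t).2)) = U := by
    show u (x / (1 - ε * t), t / (1 - ε * t)) = U
    rw [hU, hX, hT, hcdef]
  have hwXT : w (x / c, t / c) = UX := by rw [hUX, hX, hT]
  rw [hXT', hwXT]
  have hUT2 : UT = ν * UXX - U * UX := by linarith
  rw [hUT2]
  simp only [← hcdef]
  field_simp
  ring
end

section
/- Let ν ∈ ℝ, let u : ℝ × ℝ → ℝ be twice continuously differentiable, and let ε ∈ ℝ. For (x,t) with 1 − εt ≠ 0 define v(x,t) := ( u( x/(1 − εt), t/(1 − εt) ) − εx ) / (1 − εt). Then at every (x,t) with 1 − εt ≠ 0, the Burgers residuals satisfy the exact equivariance identity R[v](x,t) = (1 − εt)⁻³ · R[u]( x/(1 − εt), t/(1 − εt) ), where R[w](x,t) = ∂w/∂t(x,t) + w(x,t)·∂w/∂x(x,t) − ν·∂²w/∂x²(x,t). -/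
theorem burgers_residual_projective_equivariance
    (ν : ℝ) (u : ℝ × ℝ → ℝ) (hu : ContDiff ℝ 2 u) (ε : ℝ) :
    ∀ x t : ℝ, 1 - ε * t ≠ 0 →
      burgersRes ν
        (fun p => (u (p.1 / (1 - ε * p.2), p.2 / (1 - ε * p.2)) - ε * p.1) / (1 - ε * p.2))
        x t
      = (1 - ε * t)⁻¹ ^ 3 * burgersRes ν u (x / (1 - ε * t)) (t / (1 - ε * t)) := by
  intro x t hc
  have hud : Differentiable ℝ u := hu.differentiable (by norm_num)
  set g : ℝ × ℝ → ℝ := fun q => fderiv ℝ u q (1, 0) with hgdef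
  have hg1 : ContDiff ℝ 1 (fderiv ℝ u) := hu.fderiv_right (by norm_num)
  have hgd : Differentiable ℝ g := (hg1.clm_apply contDiff_const).differentiable (by norm_num)
  -- pointwise partials of u as fderiv applications
  have hA : ∀ a b : ℝ, HasDerivAt (fun y => u (y, b)) (g (a, b)) a := by
    intro a b
    have := (hud (a, b)).hasFDerivAt.comp_hasDerivAt a
      ((hasDerivAt_id a).prodMk (hasDerivAt_const a b))
    simpa [Function.comp_def] using this
  have hB : ∀ a b : ℝ, HasDerivAt (fun s => u (a, s)) (fderiv ℝ u (a, b) (0, 1)) b := by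
    intro a b
    have := (hud (a, b)).hasFDerivAt.comp_hasDerivAt b
      ((hasDerivAt_const b a).prodMk (hasDerivAt_id b))
    simpa [Function.comp_def] using this
  have hDxu : ∀ a b : ℝ, Dx u a b = g (a, b) := fun a b => (hA a b).deriv
  have hDtu : ∀ a b : ℝ, Dt' u a b = fderiv ℝ u (a, b) (0, 1) := fun a b => (hB a b).deriv
  have hCg : ∀ a b : ℝ, HasDerivAt (fun y => g (y, b)) (fderiv ℝ g (a, b) (1, 0)) a := by
    intro a b
    have := (hgd (a, b)).hasFDerivAt.comp_hasDerivAt a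
      ((hasDerivAt_id a).prodMk (hasDerivAt_const a b))
    simpa [Function.comp_def] using this
  have hDxxu : ∀ a b : ℝ, Dxx u a b = fderiv ℝ g (a, b) (1, 0) := by
    intro a b
    have he : (fun y => Dx u y b) = fun y => g (y, b) := funext fun y => hDxu y b
    rw [Dxx, he]; exact (hCg a b).deriv
  -- linearity helpers
  have hsmul : ∀ q : ℝ × ℝ, ∀ a : ℝ, fderiv ℝ u q (a, 0) = a * g q := by
    intro q a
    have h1 : ((a, (0:ℝ)) : ℝ × ℝ) = a • ((1:ℝ), (0:ℝ)) := by simp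
    rw [h1, map_smul, smul_eq_mul, hgdef]
  have hlin : ∀ q : ℝ × ℝ, ∀ a b : ℝ,
      fderiv ℝ u q (a, b) = a * g q + b * fderiv ℝ u q (0, 1) := by
    intro q a b
    have h1 : ((a, b) : ℝ × ℝ) = a • ((1:ℝ), (0:ℝ)) + b • ((0:ℝ), (1:ℝ)) := by simp
    rw [h1, map_add, map_smul, map_smul, smul_eq_mul, smul_eq_mul, hgdef]
  have hsmulg : ∀ q : ℝ × ℝ, ∀ a : ℝ, fderiv ℝ g q (a, 0) = a * fderiv ℝ g q (1, 0) := by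
    intro q a
    have h1 : ((a, (0:ℝ)) : ℝ × ℝ) = a • ((1:ℝ), (0:ℝ)) := by simp
    rw [h1, map_smul, smul_eq_mul]
  -- abbreviations
  set X := x / (1 - ε * t) with hX
  set T := t / (1 - ε * t) with hT
  -- x-derivative of v (for arbitrary first coordinate y)
  have hvx : ∀ y : ℝ, HasDerivAt
      (fun y' => (u (y' / (1 - ε * t), t / (1 - ε * t)) - ε * y') / (1 - ε * t))
      (((1 / (1 - ε * t)) * g (y / (1 - ε * t), T) - ε * 1) / (1 - ε * t)) y := by
    intro y
    have hinner : HasDerivAt (fun y' => u (y' / (1 - ε * t), t / (1 - ε * t)))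
        (fderiv ℝ u (y / (1 - ε * t), T) (1 / (1 - ε * t), 0)) y := by
      have := (hud (y / (1 - ε * t), T)).hasFDerivAt.comp_hasDerivAt y
        (((hasDerivAt_id y).div_const (1 - ε * t)).prodMk (hasDerivAt_const y T))
      simpa [Function.comp_def, hT] using this
    have := (hinner.sub ((hasDerivAt_id y).const_mul ε)).div_const (1 - ε * t)
    rw [hsmul] at this
    exact this
  have hDxv : ∀ y : ℝ, Dx
      (fun p => (u (p.1 / (1 - ε * p.2), p.2 / (1 - ε * p.2)) - ε * p.1) / (1 - ε * p.2)) y t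
      = ((1 / (1 - ε * t)) * g (y / (1 - ε * t), T) - ε * 1) / (1 - ε * t) := by
    intro y
    rw [Dx]
    exact (hvx y).deriv
  -- t-derivative of v
  have hcd : HasDerivAt (fun s : ℝ => 1 - ε * s) (0 - ε * 1) t :=
    (hasDerivAt_const t (1:ℝ)).sub ((hasDerivAt_id t).const_mul ε)
  have hdiv1 : HasDerivAt (fun s : ℝ => x / (1 - ε * s))
      ((0 * (1 - ε * t) - x * (0 - ε * 1)) / (1 - ε * t) ^ 2) t :=
    (hasDerivAt_const t x).div hcd hc
  have hdiv2 : HasDerivAt (fun s : ℝ => s / (1 - ε * s))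
      ((1 * (1 - ε * t) - t * (0 - ε * 1)) / (1 - ε * t) ^ 2) t :=
    (hasDerivAt_id t).div hcd hc
  have hcomp : HasDerivAt (fun s : ℝ => u (x / (1 - ε * s), s / (1 - ε * s)))
      (fderiv ℝ u (X, T)
        ((0 * (1 - ε * t) - x * (0 - ε * 1)) / (1 - ε * t) ^ 2,
         (1 * (1 - ε * t) - t * (0 - ε * 1)) / (1 - ε * t) ^ 2)) t := by
    have := (hud (X, T)).hasFDerivAt.comp_hasDerivAt t (hdiv1.prodMk hdiv2)
    simpa [Function.comp_def, hX, hT] using this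
  have hvt : HasDerivAt (fun s : ℝ => (u (x / (1 - ε * s), s / (1 - ε * s)) - ε * x) / (1 - ε * s))
      (((fderiv ℝ u (X, T)
          ((0 * (1 - ε * t) - x * (0 - ε * 1)) / (1 - ε * t) ^ 2,
           (1 * (1 - ε * t) - t * (0 - ε * 1)) / (1 - ε * t) ^ 2)) * (1 - ε * t)
        - (u (X, T) - ε * x) * (0 - ε * 1)) / (1 - ε * t) ^ 2) t :=
    (hcomp.sub_const (ε * x)).div hcd hc
  have hDtv : Dt'
      (fun p => (u (p.1 / (1 - ε * p.2), p.2 / (1 - ε * p.2)) - ε * p.1) / (1 - ε * p.2)) x t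
      = (((fderiv ℝ u (X, T)
          ((0 * (1 - ε * t) - x * (0 - ε * 1)) / (1 - ε * t) ^ 2,
           (1 * (1 - ε * t) - t * (0 - ε * 1)) / (1 - ε * t) ^ 2)) * (1 - ε * t)
        - (u (X, T) - ε * x) * (0 - ε * 1)) / (1 - ε * t) ^ 2) := by
    rw [Dt']
    exact hvt.deriv
  -- second x-derivative of v
  have hginner : HasDerivAt (fun y => g (y / (1 - ε * t), T))
      (fderiv ℝ g (X, T) (1 / (1 - ε * t), 0)) x := by
    have := (hgd (X, T)).hasFDerivAt.comp_hasDerivAt x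
      (((hasDerivAt_id x).div_const (1 - ε * t)).prodMk (hasDerivAt_const x T))
    simpa [Function.comp_def, hX] using this
  have hDxxv : Dxx
      (fun p => (u (p.1 / (1 - ε * p.2), p.2 / (1 - ε * p.2)) - ε * p.1) / (1 - ε * p.2)) x t
      = ((1 / (1 - ε * t)) * ((1 / (1 - ε * t)) * fderiv ℝ g (X, T) (1, 0)) - 0) / (1 - ε * t) := by
    rw [Dxx]
    have he : (fun y => Dx
        (fun p => (u (p.1 / (1 - ε * p.2), p.2 / (1 - ε * p.2)) - ε * p.1) / (1 - ε * p.2)) y t)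
        = fun y => ((1 / (1 - ε * t)) * g (y / (1 - ε * t), T) - ε * 1) / (1 - ε * t) :=
      funext fun y => hDxv y
    rw [he]
    have h2 := ((hginner.const_mul (1 / (1 - ε * t))).sub_const (ε * 1)).div_const (1 - ε * t)
    rw [hsmulg] at h2
    have := h2.deriv
    rw [this]
    ring
  -- put it together
  rw [burgersRes, burgersRes, hDtv, hDxv, hDxxv, hDtu, hDxu, hDxxu, hlin]
  show (_ : ℝ) = _
  have hXT : x / (1 - ε * t) = X := rfl
  have hTT : t / (1 - ε * t) = T := rfl
  rw [hXT, hTT]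
  field_simp
  ring
end

section
/- Let ν > 0 and let u : ℝ × ℝ → ℝ be twice continuously differentiable and satisfy Burgers' equation ∂u/∂t + u·∂u/∂x − ν·∂²u/∂x² = 0 on all of ℝ². Define θ(x,t) := exp( −(1/(2ν))·[ ∫₀ˣ u(s,t) ds + ∫₀ᵗ ( ν·∂u/∂x(0,τ) − u(0,τ)²/2 ) dτ ] ). Then θ(x,t) > 0 for all (x,t), and θ satisfies the heat equation ∂θ/∂t(x,t) = ν·∂²θ/∂x²(x,t) for all (x,t) ∈ ℝ². -/
open MeasureTheory intervalIntegral Metric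

section aux

variable {u : ℝ × ℝ → ℝ}

/-- x-slice derivative from differentiability. -/
lemma sliceX (hu : Differentiable ℝ u) (x t : ℝ) :
    HasDerivAt (fun y => u (y, t)) (fderiv ℝ u (x, t) (1, 0)) x :=
  ((hu (x, t)).hasFDerivAt).comp_hasDerivAt x
    ((hasDerivAt_id x).prodMk (hasDerivAt_const x t))

lemma sliceT (hu : Differentiable ℝ u) (x t : ℝ) :
    HasDerivAt (fun s => u (x, s)) (fderiv ℝ u (x, t) (0, 1)) t :=
  ((hu (x, t)).hasFDerivAt).comp_hasDerivAt t
    ((hasDerivAt_const t x).prodMk (hasDerivAt_id t))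

lemma Dx_eq (hu : Differentiable ℝ u) (x t : ℝ) :
    Dx u x t = fderiv ℝ u (x, t) (1, 0) := (sliceX hu x t).deriv

lemma Dt_eq (hu : Differentiable ℝ u) (x t : ℝ) :
    Dt' u x t = fderiv ℝ u (x, t) (0, 1) := (sliceT hu x t).deriv

lemma contDiff_fderiv_apply (hu : ContDiff ℝ 2 u) (v : ℝ × ℝ) :
    ContDiff ℝ 1 (fun p => fderiv ℝ u p v) :=
  (hu.fderiv_right (by norm_num)).clm_apply contDiff_const

lemma cont_Dx (hu : ContDiff ℝ 2 u) : Continuous (fun p : ℝ × ℝ => Dx u p.1 p.2) := by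
  have h : (fun p : ℝ × ℝ => Dx u p.1 p.2) = fun p => fderiv ℝ u p (1, 0) := by
    funext p
    rw [show p = (p.1, p.2) from rfl, Dx_eq (hu.differentiable (by norm_num))]
  rw [h]
  exact (contDiff_fderiv_apply hu _).continuous

lemma cont_Dt (hu : ContDiff ℝ 2 u) : Continuous (fun p : ℝ × ℝ => Dt' u p.1 p.2) := by
  have h : (fun p : ℝ × ℝ => Dt' u p.1 p.2) = fun p => fderiv ℝ u p (0, 1) := by
    funext p
    rw [show p = (p.1, p.2) from rfl, Dt_eq (hu.differentiable (by norm_num))]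
  rw [h]
  exact (contDiff_fderiv_apply hu _).continuous

lemma hasDeriv_Dx (hu : ContDiff ℝ 2 u) (x t : ℝ) :
    HasDerivAt (fun y => Dx u y t) (Dxx u x t) x := by
  have h2 : HasDerivAt (fun y => fderiv ℝ u (y, t) (1, 0))
      (fderiv ℝ (fun p => fderiv ℝ u p (1, 0)) (x, t) (1, 0)) x := by
    have := (((contDiff_fderiv_apply hu (1, 0)).differentiable (by norm_num)) (x, t)).hasFDerivAt.comp_hasDerivAt
      x ((hasDerivAt_id x).prodMk (hasDerivAt_const x t))
    exact this
  have heq : (fun y => Dx u y t) = fun y => fderiv ℝ u (y, t) (1, 0) :=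
    funext fun y => Dx_eq (hu.differentiable (by norm_num)) y t
  have h2' : HasDerivAt (fun y => Dx u y t)
      (fderiv ℝ (fun p => fderiv ℝ u p (1, 0)) (x, t) (1, 0)) x := by rw [heq]; exact h2
  have : Dxx u x t = fderiv ℝ (fun p => fderiv ℝ u p (1, 0)) (x, t) (1, 0) := h2'.deriv
  rw [this]; exact h2'

/-- s ↦ ν u_x(s,τ) - u(s,τ)²/2 has derivative u_t(s,τ), given Burgers. -/
lemma hasDeriv_H {ν : ℝ} (hu : ContDiff ℝ 2 u)
    (hsol : ∀ x t : ℝ, burgersRes ν u x t = 0) (s τ : ℝ) :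
    HasDerivAt (fun s => ν * Dx u s τ - u (s, τ) ^ 2 / 2) (Dt' u s τ) s := by
  have hux : HasDerivAt (fun y => u (y, τ)) (Dx u s τ) s := by
    rw [Dx_eq (hu.differentiable (by norm_num))]
    exact sliceX (hu.differentiable (by norm_num)) s τ
  have h := ((hasDeriv_Dx hu s τ).const_mul ν).sub ((hux.pow 2).div_const 2)
  refine h.congr_deriv ?_
  have hb := hsol s τ
  unfold burgersRes at hb
  push_cast
  ring_nf at hb
  linarith

end aux

theorem cole_hopf_burgers_to_heat
    (ν : ℝ) (hν : 0 < ν) (u : ℝ × ℝ → ℝ) (hu : ContDiff ℝ 2 u)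
    (hsol : ∀ x t : ℝ, burgersRes ν u x t = 0) :
    let θ : ℝ × ℝ → ℝ := fun p =>
      Real.exp (-(1 / (2 * ν)) *
        ((∫ s in (0:ℝ)..p.1, u (s, p.2)) +
          ∫ τ in (0:ℝ)..p.2, (ν * Dx u 0 τ - (u (0, τ)) ^ 2 / 2)))
    (∀ x t : ℝ, 0 < θ (x, t)) ∧ (∀ x t : ℝ, Dt' θ x t = ν * Dxx θ x t) := by
  intro θ
  have hud : Differentiable ℝ u := hu.differentiable (by norm_num)
  have hucont : Continuous u := hu.continuous
  set c : ℝ := -(1 / (2 * ν)) with hc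
  -- continuity of slices
  have hslice : ∀ t : ℝ, Continuous fun y : ℝ => u (y, t) := fun t =>
    hucont.comp (continuous_id.prodMk continuous_const)
  have hsliceT : ∀ x : ℝ, Continuous fun s : ℝ => u (x, s) := fun x =>
    hucont.comp (continuous_const.prodMk continuous_id)
  have hDtc : Continuous fun p : ℝ × ℝ => Dt' u p.1 p.2 := cont_Dt hu
  have hDxc : Continuous fun p : ℝ × ℝ => Dx u p.1 p.2 := cont_Dx hu
  -- H function
  set H : ℝ → ℝ → ℝ := fun s τ => ν * Dx u s τ - u (s, τ) ^ 2 / 2 with hH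
  have hHc : ∀ s : ℝ, Continuous fun τ => H s τ := by
    intro s
    exact (continuous_const.mul (hDxc.comp (continuous_const.prodMk continuous_id))).sub
      ((((hsliceT s).pow 2)).div_const 2)
  -- θ positivity and value
  refine ⟨fun x t => Real.exp_pos _, fun x t => ?_⟩
  -- derivative of x-slice of θ
  have hθx : ∀ y t : ℝ, HasDerivAt (fun y => θ (y, t)) (c * u (y, t) * θ (y, t)) y := by
    intro y t
    have hint : HasDerivAt (fun y : ℝ => ∫ s in (0:ℝ)..y, u (s, t)) (u (y, t)) y :=
      integral_hasDerivAt_right ((hslice t).intervalIntegrable 0 y)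
        ((hslice t).stronglyMeasurable.stronglyMeasurableAtFilter) (hslice t).continuousAt
    have h := (((hint.add_const (∫ τ in (0:ℝ)..t, (ν * Dx u 0 τ - (u (0, τ)) ^ 2 / 2))).const_mul
      c).exp)
    convert h using 1
    show c * u (y, t) * θ (y, t) = _
    simp only [θ]
    ring
  -- derivative of t-slice of θ
  have hθt : HasDerivAt (fun s => θ (x, s)) (c * H x t * θ (x, t)) t := by
    -- derivative of s ↦ ∫ 0..x u(σ,s) via dominated convergence
    have key : HasDerivAt (fun s : ℝ => ∫ σ in (0:ℝ)..x, u (σ, s))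
        (∫ σ in (0:ℝ)..x, Dt' u σ t) t := by
      obtain ⟨C, hC⟩ := (((isCompact_uIcc (a := (0:ℝ)) (b := x)).prod
        (isCompact_Icc (a := t - 1) (b := t + 1)))).exists_bound_of_continuousOn
        hDtc.continuousOn
      have := intervalIntegral.hasDerivAt_integral_of_dominated_loc_of_deriv_le
        (F := fun s σ => u (σ, s)) (F' := fun s σ => Dt' u σ s) (x₀ := t)
        (a := 0) (b := x) (s := Metric.ball t 1) (bound := fun _ => C) (μ := volume)
        (Metric.ball_mem_nhds t one_pos)
        (Filter.Eventually.of_forall fun s => ((hslice s).aestronglyMeasurable))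
        ((hslice t).intervalIntegrable 0 x)
        ((hDtc.comp (continuous_id.prodMk continuous_const)).aestronglyMeasurable)
        (Filter.Eventually.of_forall fun σ hσ s hs => by
          have hσ' : σ ∈ Set.uIcc (0:ℝ) x := Set.Ioc_subset_Icc_self hσ
          have hs' : s ∈ Set.Icc (t - 1) (t + 1) := by
            rw [Real.ball_eq_Ioo] at hs
            exact ⟨le_of_lt hs.1, le_of_lt hs.2⟩
          exact hC (σ, s) ⟨hσ', hs'⟩)
        intervalIntegrable_const
        (Filter.Eventually.of_forall fun σ hσ s hs => by
          show HasDerivAt (fun s => u (σ, s)) (Dt' u σ s) s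
          rw [Dt_eq hud]
          exact sliceT hud σ s)
      exact this.2
    -- the integral equals H x t - H 0 t
    have hval : (∫ σ in (0:ℝ)..x, Dt' u σ t) = H x t - H 0 t := by
      refine integral_eq_sub_of_hasDerivAt (fun s _ => hasDeriv_H hu hsol s t) ?_
      exact (hDtc.comp (continuous_id.prodMk continuous_const)).intervalIntegrable 0 x
    rw [hval] at key
    -- derivative of s ↦ ∫ 0..s g
    have hg : HasDerivAt (fun s : ℝ => ∫ τ in (0:ℝ)..s, (ν * Dx u 0 τ - (u (0, τ)) ^ 2 / 2))
        (H 0 t) t :=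
      integral_hasDerivAt_right ((hHc 0).intervalIntegrable 0 t)
        ((hHc 0).stronglyMeasurable.stronglyMeasurableAtFilter) (hHc 0).continuousAt
    have h := ((key.add hg).const_mul c).exp
    convert h using 1
    show c * H x t * θ (x, t) = _
    simp only [θ, Pi.add_apply]
    ring
    rfl
  -- compute Dt' θ
  have hDtθ : Dt' θ x t = c * H x t * θ (x, t) := hθt.deriv
  -- compute Dx θ then Dxx θ
  have hDxθfun : (fun y => Dx θ y t) = fun y => c * (u (y, t) * θ (y, t)) := by
    funext y
    have := (hθx y t).deriv
    rw [show Dx θ y t = deriv (fun y => θ (y, t)) y from rfl, this]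
    ring
  have hux : HasDerivAt (fun y => u (y, t)) (Dx u x t) x := by
    rw [Dx_eq hud]; exact sliceX hud x t
  have hprod : HasDerivAt (fun y => c * (u (y, t) * θ (y, t)))
      (c * (Dx u x t * θ (x, t) + u (x, t) * (c * u (x, t) * θ (x, t)))) x :=
    (hux.mul (hθx x t)).const_mul c
  have hDxxθ : Dxx θ x t = c * (Dx u x t * θ (x, t) + u (x, t) * (c * u (x, t) * θ (x, t))) := by
    rw [show Dxx θ x t = deriv (fun y => Dx θ y t) x from rfl, hDxθfun]
    exact hprod.deriv
  rw [hDtθ, hDxxθ, hH, hc]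
  have hν' : ν ≠ 0 := ne_of_gt hν
  field_simp
  ring
end
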